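/- arXiv:2111.02854 — 7 statements merged into one kernel-verified Lean document; each statement's English description precedes it below -/
import Mathlib

section
/- If {Π_a} is a PVM and {W_{ab}} is a joint POVM of {Π_a} and a POVM {B_b}, then W_{ab} = Π_a W_{ab} Π_a for all a, b; in particular each W_{ab} commutes with each Π_a. -/
/-!
Since `W a b` is one of the positive summands of `∑ b, W a b = P a`, it satisfies
`0 ≤ W a b ≤ P a`. For a projection `E` and `0 ≤ X ≤ E` one has `X * E = X = E * X`
(conjugating by `1 - E` gives `0 ≤ (1 - E) X (1 - E) ≤ 0`, so `√X (1 - E) = 0`).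
Hence `W a b = P a * W a b * P a`, and for `a' ≠ a` both `W a b * P a'` and
`P a' * W a b` vanish by orthogonality of the projections.
-/

open Matrix BigOperators ComplexOrder

theorem Matrix.PosSemidef.sum_sub_of_mem {n ι R : Type*} [Ring R] [PartialOrder R]
    [StarRing R] [AddLeftMono R] {s : Finset ι} {X : ι → Matrix n n R}
    (hX : ∀ i ∈ s, (X i).PosSemidef) {i : ι} (hi : i ∈ s) :
    (∑ j ∈ s, X j - X i).PosSemidef := by
  classical
  rw [← Finset.add_sum_erase s X hi, add_sub_cancel_left]
  exact posSemidef_sum _ fun j hj => hX j (Finset.mem_of_mem_erase hj)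

open scoped MatrixOrder Matrix.Norms.L2Operator in
theorem Matrix.PosSemidef.mul_eq_self_and_mul_eq_self_of_le_projection {n : Type*} [Fintype n]
    [DecidableEq n] {X E : Matrix n n ℂ} (hX : X.PosSemidef) (hE : E.IsHermitian)
    (hEE : E * E = E) (hXE : (E - X).PosSemidef) : X * E = X ∧ E * X = X :=
  IsStarProjection.mul_right_and_mul_left_of_nonneg_of_le ⟨hEE, hE⟩ hX.nonneg (le_iff.mpr hXE)

theorem stmt_3_general {d m n : ℕ}
    (P : Fin m → Matrix (Fin d) (Fin d) ℂ)
    (W : Fin m → Fin n → Matrix (Fin d) (Fin d) ℂ)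
    (hPh : ∀ a, (P a).IsHermitian)
    (hPo : ∀ a a', P a * P a' = if a = a' then P a else 0)
    (hWpsd : ∀ a b, (W a b).PosSemidef)
    (hmargP : ∀ a, ∑ b, W a b = P a) :
    (∀ a b, W a b = P a * W a b * P a) ∧
    (∀ a a' b, W a b * P a' = P a' * W a b) := by
  have hfix : ∀ a b, W a b * P a = W a b ∧ P a * W a b = W a b := fun a b =>
    (hWpsd a b).mul_eq_self_and_mul_eq_self_of_le_projection (hPh a) (by simp [hPo])
      (hmargP a ▸ PosSemidef.sum_sub_of_mem (fun b _ => hWpsd a b) (Finset.mem_univ b))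
  refine ⟨fun a b => by rw [(hfix a b).2, (hfix a b).1], fun a a' b => ?_⟩
  obtain ⟨hright, hleft⟩ := hfix a b
  by_cases h : a = a'
  · subst h
    rw [hright, hleft]
  · calc W a b * P a' = W a b * (P a * P a') := by rw [← Matrix.mul_assoc, hright]
      _ = P a' * P a * W a b := by simp [hPo, h, Ne.symm h]
      _ = P a' * W a b := by rw [Matrix.mul_assoc, hleft]

/-- If `P` is a PVM and `W` is a joint POVM of `P` and a POVM `B`, then
`W a b = P a * W a b * P a` for all `a`, `b`; in particular each `W a b`
commutes with each projector `P a'`. -/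
theorem stmt_3 {d m n : ℕ}
    (P : Fin m → Matrix (Fin d) (Fin d) ℂ)
    (B : Fin n → Matrix (Fin d) (Fin d) ℂ)
    (W : Fin m → Fin n → Matrix (Fin d) (Fin d) ℂ)
    (hPh : ∀ a, (P a).IsHermitian)
    (hPo : ∀ a a', P a * P a' = if a = a' then P a else 0)
    (hPsum : ∑ a, P a = 1)
    (hBpsd : ∀ b, (B b).PosSemidef) (hBsum : ∑ b, B b = 1)
    (hWpsd : ∀ a b, (W a b).PosSemidef)
    (hmargP : ∀ a, ∑ b, W a b = P a)
    (hmargB : ∀ b, ∑ a, W a b = B b) :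
    (∀ a b, W a b = P a * W a b * P a) ∧
    (∀ a a' b, W a b * P a' = P a' * W a b) :=
  stmt_3_general P W hPh hPo hWpsd hmargP
end

section
/- Let {Π_a}_{a=1}^d be a rank-one PVM, let A_a = λ Π_a + (1-λ)/d · 1 with 0 ≤ λ < 1, and let C_b be Hermitian operators with ∑_a A_a^{1/2} C_b A_a^{1/2} having B as image. Then for W_{ab} := A_a^{1/2} C_b A_a^{1/2} and any state ρ that is diagonal in the basis {Π_a} (ρ = ∑_k p_k Π_k), we have Tr[W_{ab} ρ] = Tr[(∑_m A_m^{1/2} C_b A_m^{1/2}) A_a^{1/2} ρ A_a^{1/2}] for all a, b. -/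
/-! Each `A m` is a linear combination of `1` and the pairwise commuting projections `P k`, so the
`A m`, their square roots (which commute with everything commuting with `A m`) and the diagonal
state `ρ` all commute. Hence `√A a * ρ * √A a = ρ * A a`, cyclicity of the trace turns both sides
into `Tr[C b * ρ * A a]`, the right-hand side after summing `A a * A m` over `m` with `∑ m, A m = 1`. -/

open Matrix BigOperators ComplexOrder

/-- The positive semidefinite square root of a positive semidefinite matrix (the definition
`Matrix.PosSemidef.sqrt` of Mathlib, December 2024, removed since). -/
noncomputable def Matrix.PosSemidef.sqrt {n 𝕜 : Type*} [Fintype n] [RCLike 𝕜] [DecidableEq n]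
    {A : Matrix n n 𝕜} (hA : A.PosSemidef) : Matrix n n 𝕜 :=
  hA.1.eigenvectorUnitary.1 * diagonal ((↑) ∘ (Real.sqrt ∘ hA.1.eigenvalues)) *
  (star hA.1.eigenvectorUnitary : Matrix n n 𝕜)

namespace Matrix

variable {n ι 𝕜 : Type*} [Fintype n] [DecidableEq n] [RCLike 𝕜]

open scoped MatrixOrder in
lemma PosSemidef.sqrt_eq_cfc {A : Matrix n n 𝕜} (hA : A.PosSemidef) :
    hA.sqrt = cfc Real.sqrt A := by
  rw [hA.1.cfc_eq]
  simp [PosSemidef.sqrt, IsHermitian.cfc, Unitary.conjStarAlgAut_apply, Function.comp_def]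

open scoped MatrixOrder in
lemma PosSemidef.sqrt_mul_sqrt {A : Matrix n n 𝕜} (hA : A.PosSemidef) :
    hA.sqrt * hA.sqrt = A := by
  rw [hA.sqrt_eq_cfc, ← cfc_mul ..]
  conv_rhs => rw [← cfc_id' ℝ A]
  exact cfc_congr fun x hx => Real.mul_self_sqrt (spectrum_nonneg_of_nonneg hA.nonneg hx)

open scoped MatrixOrder in
lemma _root_.Commute.posSemidef_sqrt_right {A B : Matrix n n 𝕜} (hA : A.PosSemidef)
    (h : Commute B A) : Commute B hA.sqrt := by
  rw [hA.sqrt_eq_cfc]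
  exact (h.symm.cfc_real _).symm

lemma PosSemidef.sqrt_mul_mul_sqrt_of_commute {A X : Matrix n n 𝕜} (hA : A.PosSemidef)
    (hX : Commute X A) : hA.sqrt * X * hA.sqrt = X * A := by
  rw [← (hX.posSemidef_sqrt_right hA).eq, mul_assoc, hA.sqrt_mul_sqrt]

lemma PosSemidef.trace_sqrt_mul_mul_sqrt_mul {A X : Matrix n n 𝕜} (hA : A.PosSemidef)
    (C : Matrix n n 𝕜) (hX : Commute X A) :
    (hA.sqrt * C * hA.sqrt * X).trace = (C * (X * A)).trace := by
  rw [← hA.sqrt_mul_mul_sqrt_of_commute hX, mul_assoc, mul_assoc, trace_mul_comm]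
  simp only [mul_assoc]

theorem trace_sqrt_mul_mul_sqrt_mul_eq_sum [Fintype ι] {A : ι → Matrix n n 𝕜}
    (hA : ∀ m, (A m).PosSemidef) (hAcomm : ∀ m m', Commute (A m) (A m')) (hAsum : ∑ m, A m = 1)
    {ρ : Matrix n n 𝕜} (hρ : ∀ m, Commute ρ (A m)) (C : Matrix n n 𝕜) (a : ι) :
    ((hA a).sqrt * C * (hA a).sqrt * ρ).trace
      = ((∑ m, (hA m).sqrt * C * (hA m).sqrt) * ((hA a).sqrt * ρ * (hA a).sqrt)).trace := by
  rw [(hA a).trace_sqrt_mul_mul_sqrt_mul C (hρ a), (hA a).sqrt_mul_mul_sqrt_of_commute (hρ a),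
    Finset.sum_mul, trace_sum]
  simp only [fun m => (hA m).trace_sqrt_mul_mul_sqrt_mul C ((hρ m).mul_left (hAcomm a m))]
  rw [← trace_sum, ← Finset.mul_sum, ← Finset.mul_sum, hAsum, mul_one]

end Matrix

lemma commute_of_mul_eq_ite {M ι : Type*} [MulZeroClass M] [DecidableEq ι] {P : ι → M}
    (hP : ∀ a a', P a * P a' = if a = a' then P a else 0) (a a' : ι) : Commute (P a) (P a') := by
  by_cases h : a = a'
  · rw [h]
  · rw [Commute, SemiconjBy, hP, hP, if_neg h, if_neg (Ne.symm h)]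

lemma sum_smul_add_smul_one_eq_one {n : Type*} [DecidableEq n] {d : ℕ} (hd : 0 < d)
    {P : Fin d → Matrix n n ℂ} (hP : ∑ a, P a = 1) (lam : ℝ) :
    ∑ a, ((lam : ℂ) • P a + (((1 - lam) / d : ℝ) : ℂ) • 1) = 1 := by
  rw [Finset.sum_add_distrib, ← Finset.smul_sum, hP, Finset.sum_const, Finset.card_univ,
    Fintype.card_fin, ← Nat.cast_smul_eq_nsmul ℂ, smul_smul, ← add_smul]
  push_cast
  rw [mul_div_cancel₀ _ (by exact_mod_cast hd.ne'), add_sub_cancel, one_smul]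

theorem stmt_7_general {d n : ℕ} (hd : 0 < d)
    (lam : ℝ)
    (P : Fin d → Matrix (Fin d) (Fin d) ℂ)
    (hPo : ∀ a a', P a * P a' = if a = a' then P a else 0)
    (hPsum : ∑ a, P a = 1)
    (A : Fin d → Matrix (Fin d) (Fin d) ℂ)
    (hA : ∀ a, A a = (lam : ℂ) • P a + (((1 - lam) / d : ℝ) : ℂ) • 1)
    (hApsd : ∀ a, (A a).PosSemidef)
    (C : Fin n → Matrix (Fin d) (Fin d) ℂ)
    (W : Fin d → Fin n → Matrix (Fin d) (Fin d) ℂ)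
    (hW : ∀ a b, W a b = (hApsd a).sqrt * C b * (hApsd a).sqrt)
    (p : Fin d → ℝ)
    (ρ : Matrix (Fin d) (Fin d) ℂ)
    (hρ : ρ = ∑ k, ((p k : ℝ) : ℂ) • P k) :
    ∀ a b, (W a b * ρ).trace
      = ((∑ m, (hApsd m).sqrt * C b * (hApsd m).sqrt)
          * ((hApsd a).sqrt * ρ * (hApsd a).sqrt)).trace := by
  intro a b
  have hPcomm := commute_of_mul_eq_ite hPo
  have hcommA : ∀ X, (∀ k, Commute X (P k)) → ∀ m, Commute X (A m) := fun X hX m => by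
    rw [hA m]
    exact ((hX m).smul_right _).add_right ((Commute.one_right X).smul_right _)
  have hAcomm : ∀ m m', Commute (A m) (A m') :=
    fun m => hcommA _ fun k => (hcommA _ (hPcomm k) m).symm
  have hρcomm : ∀ m, Commute ρ (A m) := hcommA ρ fun k => by
    rw [hρ]
    exact Commute.sum_left _ _ _ fun j _ => (hPcomm j k).smul_left _
  have hAsum : ∑ m, A m = 1 := by
    simp only [hA]
    exact sum_smul_add_smul_one_eq_one hd hPsum lam
  rw [hW]
  exact Matrix.trace_sqrt_mul_mul_sqrt_mul_eq_sum hApsd hAcomm hAsum hρcomm (C b) a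

/-- Fluctuation condition for the noisy joint observable: for the noisy POVM
`A a = λ Π a + (1-λ)/d 1` built from a rank-one PVM, Hermitian operators `C b`, the joint
effects `W a b = √(A a) C b √(A a)`, and any state `ρ` diagonal in the PVM basis, the
single-measurement statistics of `W` agree with the sequential (two-point) statistics. -/
theorem stmt_7 {d n : ℕ} (hd : 0 < d)
    (lam : ℝ) (hlam0 : 0 ≤ lam) (hlam1 : lam < 1)
    (P : Fin d → Matrix (Fin d) (Fin d) ℂ)
    (hPh : ∀ a, (P a).IsHermitian)
    (hPo : ∀ a a', P a * P a' = if a = a' then P a else 0)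
    (hPsum : ∑ a, P a = 1)
    (hPtr : ∀ a, (P a).trace = 1)
    (A : Fin d → Matrix (Fin d) (Fin d) ℂ)
    (hA : ∀ a, A a = (lam : ℂ) • P a + (((1 - lam) / d : ℝ) : ℂ) • 1)
    (hApsd : ∀ a, (A a).PosSemidef)
    (C : Fin n → Matrix (Fin d) (Fin d) ℂ)
    (hCherm : ∀ b, (C b).IsHermitian)
    (W : Fin d → Fin n → Matrix (Fin d) (Fin d) ℂ)
    (hW : ∀ a b, W a b = (hApsd a).sqrt * C b * (hApsd a).sqrt)
    (p : Fin d → ℝ) (hp : ∀ k, 0 ≤ p k) (hpsum : ∑ k, p k = 1)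
    (ρ : Matrix (Fin d) (Fin d) ℂ)
    (hρ : ρ = ∑ k, ((p k : ℝ) : ℂ) • P k) :
    ∀ a b, (W a b * ρ).trace
      = ((∑ m, (hApsd m).sqrt * C b * (hApsd m).sqrt)
          * ((hApsd a).sqrt * ρ * (hApsd a).sqrt)).trace :=
  stmt_7_general hd lam P hPo hPsum A hA hApsd C W hW p ρ hρ
end

section
/- For a qubit (d = 2), two white-noise POVMs A_a = λ Π_a + (1-λ)/2 · 1 and B_b = γ Π'_b + (1-γ)/2 · 1 built from arbitrary rank-one PVMs are jointly measurable whenever λ² + γ² ≤ 1. -/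
/-!
Write a Hermitian qubit matrix as `t • 1 + v · σ` with `v ∈ ℝ³`; it is positive semidefinite as soon
as `‖v‖ ≤ t`. The two noisy observables have Bloch vectors `u = λ n` and `w = γ m`, and
`W a b = ¼ (1 + ⟪uₐ, w_b⟫ + (uₐ + w_b) · σ)` with `uₐ = (-1)ᵃ u`, `w_b = (-1)ᵇ w` is a joint POVM:
its marginals are immediate because the signs cancel in the sums, and positivity is the inequality
`‖uₐ + w_b‖ ≤ 1 + ⟪uₐ, w_b⟫`. Squared, it reads `‖u‖² + ‖w‖² ≤ 1 + ⟪uₐ, w_b⟫²`, and the right side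
is nonnegative because `2 ⟪uₐ, w_b⟫ ≥ -‖u‖² - ‖w‖² ≥ -1`.
-/

open Matrix ComplexOrder RealInnerProductSpace

theorem Matrix.posSemidef_fin_two {a d : ℝ} {b : ℂ} (ha : 0 ≤ a) (hd : 0 ≤ d)
    (hb : Complex.normSq b ≤ a * d) : !![(a : ℂ), b; star b, (d : ℂ)].PosSemidef := by
  refine .of_dotProduct_mulVec_nonneg ?_ fun z => ?_
  · ext i j
    fin_cases i <;> fin_cases j <;> simp
  obtain ⟨x, y⟩ := b
  set p := (z 0).re
  set q := (z 0).im
  set r := (z 1).re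
  set s := (z 1).im
  rw [Complex.nonneg_iff]
  simp only [Complex.normSq_apply] at hb
  simp only [dotProduct, mulVec, Fin.sum_univ_two, Pi.star_apply, RCLike.star_def, of_apply,
    cons_val', cons_val_fin_one, cons_val_zero, cons_val_one, Complex.add_re, Complex.add_im,
    Complex.mul_re, Complex.mul_im, Complex.conj_re, Complex.conj_im, Complex.ofReal_re,
    Complex.ofReal_im]
  refine ⟨?_, by ring⟩
  rcases ha.eq_or_lt with rfl | ha
  · obtain ⟨rfl, rfl⟩ : x = 0 ∧ y = 0 := by constructor <;> nlinarith
    nlinarith [mul_nonneg hd (sq_nonneg r), mul_nonneg hd (sq_nonneg s)]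
  · -- `a · z*Mz = |a z₀ + b z₁|² + (a d - |b|²) |z₁|²`
    nlinarith [sq_nonneg (a * p + x * r - y * s), sq_nonneg (a * q + x * s + y * r),
      mul_nonneg (sub_nonneg.2 hb) (add_nonneg (sq_nonneg r) (sq_nonneg s))]

theorem norm_add_le_one_add_inner {E : Type*} [NormedAddCommGroup E] [InnerProductSpace ℝ E]
    {u w : E} (h : ‖u‖ ^ 2 + ‖w‖ ^ 2 ≤ 1) : ‖u + w‖ ≤ 1 + ⟪u, w⟫ := by
  have hsq := norm_add_sq_real u w
  have hpos : 0 ≤ 1 + ⟪u, w⟫ := by nlinarith [sq_nonneg ‖u + w‖]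
  rw [← sq_le_sq₀ (norm_nonneg _) hpos]
  nlinarith [sq_nonneg ⟪u, w⟫]

def JointlyMeasurable {α β n : Type*} [Fintype α] [Fintype β] [Fintype n] [DecidableEq n]
    (A : α → Matrix n n ℂ) (B : β → Matrix n n ℂ) : Prop :=
  ∃ W : α → β → Matrix n n ℂ, (∀ a b, (W a b).PosSemidef) ∧ (∑ a, ∑ b, W a b = 1) ∧
    (∀ a, ∑ b, W a b = A a) ∧ (∀ b, ∑ a, W a b = B b)

namespace Qubit

def pauli : Fin 3 → Matrix (Fin 2) (Fin 2) ℂ :=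
  ![!![0, 1; 1, 0], !![0, -Complex.I; Complex.I, 0], !![1, 0; 0, -1]]

noncomputable def blochMatrix (t : ℝ) (v : EuclideanSpace ℝ (Fin 3)) : Matrix (Fin 2) (Fin 2) ℂ :=
  (t : ℂ) • 1 + ∑ i, (v i : ℂ) • pauli i

theorem blochMatrix_eq (t : ℝ) (v : EuclideanSpace ℝ (Fin 3)) :
    blochMatrix t v = !![((t + v 2 : ℝ) : ℂ), v 0 - v 1 * Complex.I;
      v 0 + v 1 * Complex.I, ((t - v 2 : ℝ) : ℂ)] := by
  ext i j
  fin_cases i <;> fin_cases j <;> simp [blochMatrix, pauli, Fin.sum_univ_three] <;> ring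

theorem blochMatrix_add (t t' : ℝ) (v v' : EuclideanSpace ℝ (Fin 3)) :
    blochMatrix (t + t') (v + v') = blochMatrix t v + blochMatrix t' v' := by
  simp only [blochMatrix, PiLp.add_apply, Complex.ofReal_add, add_smul, Finset.sum_add_distrib]
  abel

theorem blochMatrix_smul (c t : ℝ) (v : EuclideanSpace ℝ (Fin 3)) :
    blochMatrix (c * t) (c • v) = c • blochMatrix t v := by
  simp only [blochMatrix, PiLp.smul_apply, smul_eq_mul, Complex.ofReal_mul, mul_smul, smul_add,
    Finset.smul_sum, Complex.coe_smul]

theorem blochMatrix_posSemidef {t : ℝ} {v : EuclideanSpace ℝ (Fin 3)} (h : ‖v‖ ≤ t) :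
    (blochMatrix t v).PosSemidef := by
  have hv : v 0 ^ 2 + v 1 ^ 2 + v 2 ^ 2 ≤ t ^ 2 := by
    rw [← Fin.sum_univ_three (fun i => v i ^ 2), ← EuclideanSpace.real_norm_sq_eq]
    exact pow_le_pow_left₀ (norm_nonneg v) h 2
  obtain ⟨hv2, hv2'⟩ := abs_le_of_sq_le_sq' (a := v 2)
    (by nlinarith [sq_nonneg (v 0), sq_nonneg (v 1)]) ((norm_nonneg v).trans h)
  rw [blochMatrix_eq]
  convert posSemidef_fin_two (a := t + v 2) (b := v 0 - v 1 * Complex.I) (d := t - v 2)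
    (by linarith) (by linarith) ?_ using 3
  · simp
  · simp only [Complex.normSq_apply, Complex.sub_re, Complex.sub_im, Complex.mul_re,
      Complex.mul_im, Complex.ofReal_re, Complex.ofReal_im, Complex.I_re, Complex.I_im]
    nlinarith

noncomputable def binaryObservable (u : EuclideanSpace ℝ (Fin 3)) (a : Fin 2) :
    Matrix (Fin 2) (Fin 2) ℂ :=
  (1 / 2 : ℝ) • blochMatrix 1 ((-1 : ℝ) ^ (a : ℕ) • u)

theorem sum_binaryObservable (u : EuclideanSpace ℝ (Fin 3)) :
    ∑ a, binaryObservable u a = 1 := by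
  simp only [binaryObservable, Fin.sum_univ_two, ← smul_add, ← blochMatrix_add, Fin.val_zero,
    Fin.val_one, pow_zero, pow_one, one_smul, neg_one_smul, add_neg_cancel]
  rw [blochMatrix, ← Complex.coe_smul]
  simp only [PiLp.zero_apply, Complex.ofReal_zero, zero_smul, Finset.sum_const_zero, add_zero,
    smul_smul]
  norm_num

theorem sum_blochMatrix_sign (x w : EuclideanSpace ℝ (Fin 3)) :
    ∑ b : Fin 2, (1 / 4 : ℝ) •
        blochMatrix (1 + ⟪x, (-1 : ℝ) ^ (b : ℕ) • w⟫) (x + (-1 : ℝ) ^ (b : ℕ) • w) =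
      (1 / 2 : ℝ) • blochMatrix 1 x := by
  simp only [Fin.sum_univ_two, ← smul_add, ← blochMatrix_add, Fin.val_zero, Fin.val_one, pow_zero,
    pow_one, one_smul, neg_one_smul, inner_neg_right]
  rw [show 1 + ⟪x, w⟫ + (1 + -⟪x, w⟫) = 2 * 1 by ring,
    show x + w + (x + -w) = (2 : ℝ) • x by module, blochMatrix_smul, smul_smul]
  norm_num

theorem jointlyMeasurable_binaryObservable {u w : EuclideanSpace ℝ (Fin 3)}
    (h : ‖u‖ ^ 2 + ‖w‖ ^ 2 ≤ 1) :
    JointlyMeasurable (binaryObservable u) (binaryObservable w) := by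
  set s : Fin 2 → ℝ := fun a => (-1) ^ (a : ℕ)
  have hs : ∀ a, |s a| = 1 := fun a => by simp [s]
  refine ⟨fun a b => (1 / 4 : ℝ) • blochMatrix (1 + ⟪s a • u, s b • w⟫) (s a • u + s b • w),
    fun a b => ?_, ?_, fun a => sum_blochMatrix_sign _ _, fun b => ?_⟩
  · refine .smul (blochMatrix_posSemidef (norm_add_le_one_add_inner ?_)) (by norm_num)
    simpa [norm_smul, hs, mul_pow] using h
  · exact (Finset.sum_congr rfl fun a _ => sum_blochMatrix_sign _ _).trans (sum_binaryObservable u)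
  · simp_rw [real_inner_comm, add_comm]
    exact sum_blochMatrix_sign _ _

theorem noisy_projective_eq_binaryObservable (lam : ℝ) (v : Fin 3 → ℝ) (a : Fin 2) :
    (lam : ℂ) • (((1 / 2 : ℝ) : ℂ) • (1 + ((-1 : ℂ) ^ (a : ℕ)) • ∑ i, (v i : ℂ) • pauli i)) +
      (((1 - lam) / 2 : ℝ) : ℂ) • 1 = binaryObservable (lam • WithLp.toLp 2 v) a := by
  simp only [binaryObservable, blochMatrix, PiLp.smul_apply, smul_eq_mul, Complex.ofReal_mul,
    mul_smul, ← Finset.smul_sum, ← Complex.coe_smul, Complex.ofReal_pow, Complex.ofReal_neg,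
    Complex.ofReal_one]
  module

theorem norm_smul_toLp_sq {lam : ℝ} {v : Fin 3 → ℝ} (hv : ∑ i, v i ^ 2 = 1) :
    ‖lam • WithLp.toLp 2 v‖ ^ 2 = lam ^ 2 := by
  rw [norm_smul, mul_pow, EuclideanSpace.real_norm_sq_eq]
  simp [hv]

end Qubit

open Qubit in
theorem stmt_12_general (lam gam : ℝ)
    (hbusch : lam ^ 2 + gam ^ 2 ≤ 1)
    (nv mv : Fin 3 → ℝ) (hn : ∑ i, nv i ^ 2 = 1) (hm : ∑ i, mv i ^ 2 = 1)
    (σ : Fin 3 → Matrix (Fin 2) (Fin 2) ℂ)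
    (hσ : σ = ![!![0, 1; 1, 0], !![0, -Complex.I; Complex.I, 0], !![1, 0; 0, -1]])
    (P Q : Fin 2 → Matrix (Fin 2) (Fin 2) ℂ)
    (hP : ∀ a, P a = ((1 / 2 : ℝ) : ℂ) •
      ((1 : Matrix (Fin 2) (Fin 2) ℂ) + ((-1 : ℂ) ^ (a : ℕ)) • ∑ i, (nv i : ℂ) • σ i))
    (hQ : ∀ b, Q b = ((1 / 2 : ℝ) : ℂ) •
      ((1 : Matrix (Fin 2) (Fin 2) ℂ) + ((-1 : ℂ) ^ (b : ℕ)) • ∑ i, (mv i : ℂ) • σ i))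
    (A B : Fin 2 → Matrix (Fin 2) (Fin 2) ℂ)
    (hA : ∀ a, A a = (lam : ℂ) • P a + (((1 - lam) / 2 : ℝ) : ℂ) • 1)
    (hB : ∀ b, B b = (gam : ℂ) • Q b + (((1 - gam) / 2 : ℝ) : ℂ) • 1) :
    ∃ W : Fin 2 → Fin 2 → Matrix (Fin 2) (Fin 2) ℂ,
      (∀ a b, (W a b).PosSemidef) ∧ (∑ a, ∑ b, W a b = 1) ∧
      (∀ a, ∑ b, W a b = A a) ∧ (∀ b, ∑ a, W a b = B b) := by
  obtain rfl : σ = pauli := hσ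
  obtain rfl : A = binaryObservable (lam • WithLp.toLp 2 nv) :=
    funext fun a => by rw [hA, hP, noisy_projective_eq_binaryObservable]
  obtain rfl : B = binaryObservable (gam • WithLp.toLp 2 mv) :=
    funext fun b => by rw [hB, hQ, noisy_projective_eq_binaryObservable]
  apply jointlyMeasurable_binaryObservable
  rwa [norm_smul_toLp_sq hn, norm_smul_toLp_sq hm]

/-- Busch criterion (sufficient direction) for a qubit: two white-noise POVMs
`A a = λ Π a + (1-λ)/2 · 1` and `B b = γ Π' b + (1-γ)/2 · 1` built from arbitrary rank-one
PVMs (given by Bloch vectors `n`, `m`) are jointly measurable whenever `λ² + γ² ≤ 1`. -/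
theorem stmt_12 (lam gam : ℝ)
    (hlam0 : 0 ≤ lam) (hlam1 : lam ≤ 1) (hgam0 : 0 ≤ gam) (hgam1 : gam ≤ 1)
    (hbusch : lam ^ 2 + gam ^ 2 ≤ 1)
    (nv mv : Fin 3 → ℝ) (hn : ∑ i, nv i ^ 2 = 1) (hm : ∑ i, mv i ^ 2 = 1)
    (σ : Fin 3 → Matrix (Fin 2) (Fin 2) ℂ)
    (hσ : σ = ![!![0, 1; 1, 0], !![0, -Complex.I; Complex.I, 0], !![1, 0; 0, -1]])
    (P Q : Fin 2 → Matrix (Fin 2) (Fin 2) ℂ)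
    (hP : ∀ a, P a = ((1 / 2 : ℝ) : ℂ) •
      ((1 : Matrix (Fin 2) (Fin 2) ℂ) + ((-1 : ℂ) ^ (a : ℕ)) • ∑ i, (nv i : ℂ) • σ i))
    (hQ : ∀ b, Q b = ((1 / 2 : ℝ) : ℂ) •
      ((1 : Matrix (Fin 2) (Fin 2) ℂ) + ((-1 : ℂ) ^ (b : ℕ)) • ∑ i, (mv i : ℂ) • σ i))
    (A B : Fin 2 → Matrix (Fin 2) (Fin 2) ℂ)
    (hA : ∀ a, A a = (lam : ℂ) • P a + (((1 - lam) / 2 : ℝ) : ℂ) • 1)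
    (hB : ∀ b, B b = (gam : ℂ) • Q b + (((1 - gam) / 2 : ℝ) : ℂ) • 1) :
    ∃ W : Fin 2 → Fin 2 → Matrix (Fin 2) (Fin 2) ℂ,
      (∀ a b, (W a b).PosSemidef) ∧ (∑ a, ∑ b, W a b = 1) ∧
      (∀ a, ∑ b, W a b = A a) ∧ (∀ b, ∑ a, W a b = B b) :=
  stmt_12_general lam gam hbusch nv mv hn hm σ hσ P Q hP hQ A B hA hB
end

section
/- Suppose ∑_a e^{β f(a)} I_a(ρ₀) = α · 1 for some α > 0, where {I_a} are completely positive maps forming an instrument. Then for any unitary U and any POVM {B_b} with assignment g, the Jarzynski-type sum ∑_{a,b} Tr[B_b U I_a(ρ₀) U†] e^{-β(g(b) - f(a))} equals α ∑_b e^{-β g(b)} Tr[B_b], independently of U. -/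
open Matrix BigOperators ComplexOrder

/-- Generalized Jarzynski equality: if the instrument maps `I a` applied to the initial
state `ρ₀` satisfy `∑ a, e^{β f a} I a ρ₀ = α • 1`, then for any unitary `U` and any POVM
`B` with assignment `g`, `∑_{a,b} Tr[B b U (I a ρ₀) U†] e^{-β (g b - f a)}` equals
`α ∑ b e^{-β g b} Tr[B b]`, independently of `U`. -/
theorem stmt_14 {d m n : ℕ}
    (β : ℝ) (hβ : 0 < β)
    (ρ₀ : Matrix (Fin d) (Fin d) ℂ) (hρ₀ : ρ₀.PosSemidef) (hρ₀tr : ρ₀.trace = 1)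
    (I : Fin m → (Matrix (Fin d) (Fin d) ℂ →ₗ[ℂ] Matrix (Fin d) (Fin d) ℂ))
    (f : Fin m → ℝ) (g : Fin n → ℝ) (α : ℝ) (hα : 0 < α)
    (hsum : ∑ a, ((Real.exp (β * f a) : ℝ) : ℂ) • I a ρ₀
      = ((α : ℝ) : ℂ) • (1 : Matrix (Fin d) (Fin d) ℂ))
    (B : Fin n → Matrix (Fin d) (Fin d) ℂ)
    (hBpsd : ∀ b, (B b).PosSemidef) (hBsum : ∑ b, B b = 1)
    (U : Matrix (Fin d) (Fin d) ℂ) (hU : U ∈ Matrix.unitaryGroup (Fin d) ℂ) :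
    ∑ a, ∑ b, ((Real.exp (-(β * (g b - f a))) : ℝ) : ℂ) * (B b * (U * I a ρ₀ * Uᴴ)).trace
      = (α : ℂ) * ∑ b, ((Real.exp (-(β * g b)) : ℝ) : ℂ) * (B b).trace := by
  rw [Finset.sum_comm]
  rw [Finset.mul_sum]
  refine Finset.sum_congr rfl fun b _ => ?_
  have key : ∑ a, ((Real.exp (β * f a) : ℝ) : ℂ) * (B b * (U * I a ρ₀ * Uᴴ)).trace
      = (α : ℂ) * (B b).trace := by
    have : ∑ a, (B b * (U * (((Real.exp (β * f a) : ℝ) : ℂ) • I a ρ₀) * Uᴴ)).trace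
        = (B b * (U * (∑ a, ((Real.exp (β * f a) : ℝ) : ℂ) • I a ρ₀) * Uᴴ)).trace := by
      simp [Matrix.mul_sum, Matrix.sum_mul, Matrix.trace_sum]
    rw [hsum] at this
    have hUU : U * Uᴴ = 1 := by
      have := hU.2
      simpa [Matrix.star_eq_conjTranspose] using this
    simp only [Matrix.smul_mul, Matrix.mul_smul, Matrix.trace_smul, smul_eq_mul] at this
    rw [this]
    rw [mul_one, hUU, mul_one]
  calc ∑ a, ((Real.exp (-(β * (g b - f a))) : ℝ) : ℂ) * (B b * (U * I a ρ₀ * Uᴴ)).trace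
      = ((Real.exp (-(β * g b)) : ℝ) : ℂ) * ∑ a, ((Real.exp (β * f a) : ℝ) : ℂ) * (B b * (U * I a ρ₀ * Uᴴ)).trace := by
        rw [Finset.mul_sum]
        refine Finset.sum_congr rfl fun a _ => ?_
        have h : Real.exp (-(β * (g b - f a))) = Real.exp (-(β * g b)) * Real.exp (β * f a) := by
          rw [← Real.exp_add]; ring_nf
        rw [h]; push_cast; ring
    _ = ((Real.exp (-(β * g b)) : ℝ) : ℂ) * ((α : ℂ) * (B b).trace) := by rw [key]
    _ = (α : ℂ) * (((Real.exp (-(β * g b)) : ℝ) : ℂ) * (B b).trace) := by ring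
end

section
/- Let Λ be the linear map on d×d matrices given by Λ(X) = ∑_a A_a^{1/2} X A_a^{1/2} with A_a = λ Π_a + (1-λ)/d · 1 for a rank-one PVM {Π_a}_{a=1}^d and 0 ≤ λ < 1. Then Λ acts as the identity on matrices diagonal in the {Π_a} basis, and multiplies each off-diagonal matrix unit Π_i X Π_j (i ≠ j) by the factor κ = 2√(λ + (1-λ)/d)·√((1-λ)/d) + (d-2)(1-λ)/d. In particular, Λ is invertible for κ > 0. -/
/-!
Write `α = √(λ + (1-λ)/d)` and `β = √((1-λ)/d)`, so that `√A a = β • 1 + (α - β) • Π a`.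
Expanding `∑ a, √A a * X * √A a` with `∑ a, Π a = 1` gives `Λ = κ • id + (α - β)² • Δ`, where
`Δ X = ∑ a, Π a * X * Π a` is the pinching map of the PVM, and `α² + (d - 1) β² = 1` turns this
into `Λ = κ • id + (1 - κ) • Δ`. The pinching map is an idempotent that fixes the diagonal
matrices and kills the off-diagonal blocks `Π i * X * Π j`, and `κ • 1 + (1 - κ) • p` is
invertible for every idempotent `p` as soon as `κ ≠ 0`, with inverse `κ⁻¹ • 1 + (1 - κ⁻¹) • p`.
-/

section Pinching

variable {ι R A : Type*} [Fintype ι] [CommSemiring R] [Semiring A] [Algebra R A]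

variable (R) in
@[simps]
def pinching (P : ι → A) : A →ₗ[R] A where
  toFun X := ∑ a, P a * X * P a
  map_add' X Y := by simp only [mul_add, add_mul, Finset.sum_add_distrib]
  map_smul' c X := by simp only [mul_smul_comm, smul_mul_assoc, Finset.smul_sum, RingHom.id_apply]

theorem sum_mul_mul_smul_one_add_smul {P : ι → A} (hP : ∑ a, P a = 1) (β γ : R) (X : A) :
    ∑ a, (β • 1 + γ • P a) * X * (β • 1 + γ • P a)
      = (Fintype.card ι * β ^ 2 + 2 * β * γ) • X + γ ^ 2 • pinching R P X := by
  have hleft : ∑ a, P a * X = X := by rw [← Finset.sum_mul, hP, one_mul]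
  have hright : ∑ a, X * P a = X := by rw [← Finset.mul_sum, hP, mul_one]
  simp only [add_mul, mul_add, smul_mul_assoc, mul_smul_comm, one_mul, mul_one,
    Finset.sum_add_distrib, ← Finset.smul_sum, hleft, hright, pinching_apply, Finset.sum_const,
    Finset.card_univ]
  rw [← Nat.cast_smul_eq_nsmul R]
  module

variable {P : ι → A} (hP : OrthogonalIdempotents P)
include hP

theorem OrthogonalIdempotents.pinching_mul_mul [DecidableEq ι] (i j : ι) (X : A) :
    pinching R P (P i * X * P j) = if i = j then P i * X * P j else 0 := by
  have hterm (a : ι) : P a * (P i * X * P j) * P a = (P a * P i) * X * (P j * P a) := by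
    simp only [mul_assoc]
  simp only [pinching_apply, hterm, hP.mul_eq]
  split_ifs with h
  · subst h; simp
  · simp [Ne.symm h, ite_mul, mul_ite]

theorem OrthogonalIdempotents.pinching_apply_self (i : ι) : pinching R P (P i) = P i := by
  classical
  simpa [(hP.idem i).eq] using hP.pinching_mul_mul (R := R) i i 1

theorem OrthogonalIdempotents.isIdempotentElem_pinching :
    IsIdempotentElem (pinching R P) := by
  classical
  refine LinearMap.ext fun X => ?_
  simp [Module.End.mul_apply, pinching_apply R P X, map_sum, hP.pinching_mul_mul]

end Pinching

theorem IsIdempotentElem.isUnit_smul_one_add_smul {K A : Type*} [Field K] [Ring A]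
    [Algebra K A] {p : A} (hp : IsIdempotentElem p) {c : K} (hc : c ≠ 0) :
    IsUnit (c • 1 + (1 - c) • p) := by
  have hinv (c : K) (hc : c ≠ 0) :
      (c • 1 + (1 - c) • p) * (c⁻¹ • 1 + (1 - c⁻¹) • p) = 1 := by
    simp only [add_mul, mul_add, smul_mul_smul, one_mul, mul_one, hp.eq]
    match_scalars <;> field_simp
    ring
  refine ⟨⟨_, _, hinv c hc, ?_⟩, rfl⟩
  simpa using hinv c⁻¹ (inv_ne_zero hc)

theorem sqrt_sub_sqrt_sq_add_eq_one {d lam : ℝ} (hd : 0 < d) (hlam0 : 0 ≤ lam) (hlam1 : lam ≤ 1) :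
    (√(lam + (1 - lam) / d) - √((1 - lam) / d)) ^ 2
      + (2 * √(lam + (1 - lam) / d) * √((1 - lam) / d) + (d - 2) * ((1 - lam) / d)) = 1 := by
  have hβ : √((1 - lam) / d) ^ 2 = (1 - lam) / d := Real.sq_sqrt (by bound)
  have hα : √(lam + (1 - lam) / d) ^ 2 = lam + (1 - lam) / d := Real.sq_sqrt (by bound)
  have htr : lam + (1 - lam) / d + (d - 1) * ((1 - lam) / d) = 1 := by
    field_simp; ring
  linear_combination hα + hβ + htr

theorem stmt_16_general {d : ℕ} (hd : 2 ≤ d)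
    (lam : ℝ) (hlam0 : 0 ≤ lam) (hlam1 : lam < 1)
    (P : Fin d → Matrix (Fin d) (Fin d) ℂ)
    (hPo : ∀ a a', P a * P a' = if a = a' then P a else 0)
    (hPsum : ∑ a, P a = 1)
    (sqrtA : Fin d → Matrix (Fin d) (Fin d) ℂ)
    (hsqrtA : ∀ a, sqrtA a = ((Real.sqrt (lam + (1 - lam) / d) : ℝ) : ℂ) • P a
      + ((Real.sqrt ((1 - lam) / d) : ℝ) : ℂ) • ((1 : Matrix (Fin d) (Fin d) ℂ) - P a))
    (Λ : Matrix (Fin d) (Fin d) ℂ → Matrix (Fin d) (Fin d) ℂ)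
    (hΛ : ∀ X, Λ X = ∑ a, sqrtA a * X * sqrtA a)
    (κ : ℝ)
    (hκ : κ = 2 * Real.sqrt (lam + (1 - lam) / d) * Real.sqrt ((1 - lam) / d)
      + ((d : ℝ) - 2) * ((1 - lam) / d)) :
    (∀ c : Fin d → ℂ, Λ (∑ i, c i • P i) = ∑ i, c i • P i) ∧
    (∀ i j, i ≠ j → ∀ X : Matrix (Fin d) (Fin d) ℂ,
      Λ (P i * X * P j) = (κ : ℂ) • (P i * X * P j)) ∧
    (0 < κ → Function.Bijective Λ) := by
  have hP : OrthogonalIdempotents P := OrthogonalIdempotents.iff_mul_eq.mpr hPo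
  set α := √(lam + (1 - lam) / d)
  set β := √((1 - lam) / d)
  have hd0 : (0 : ℝ) < d := Nat.cast_pos.mpr (by omega)
  have hβ : β ^ 2 = (1 - lam) / d := Real.sq_sqrt (by bound)
  have hcoeff : (d * β ^ 2 + 2 * β * (α - β) : ℂ) = κ := by
    rw [hκ, ← hβ]; push_cast; ring
  have hγ : ((α - β) ^ 2 : ℂ) = 1 - κ := by
    have := sqrt_sub_sqrt_sq_add_eq_one hd0 hlam0 hlam1.le
    rw [← hκ] at this
    exact_mod_cast eq_sub_of_add_eq this
  have hΛ_eq : Λ = ⇑((κ : ℂ) • 1 + (1 - (κ : ℂ)) • pinching ℂ P) := by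
    funext X
    have hsqrtA' (a : Fin d) : sqrtA a = (β : ℂ) • 1 + ((α : ℂ) - β) • P a := by
      rw [hsqrtA]; module
    simp only [hΛ, hsqrtA', sum_mul_mul_smul_one_add_smul hPsum, Fintype.card_fin, hcoeff, hγ,
      LinearMap.add_apply, LinearMap.smul_apply, Module.End.one_apply]
  refine ⟨fun c => ?_, fun i j hij X => ?_, fun hκ0 => ?_⟩
  · have hdiag : pinching ℂ P (∑ i, c i • P i) = ∑ i, c i • P i := by
      simp only [map_sum, map_smul, hP.pinching_apply_self]
    rw [hΛ_eq, LinearMap.add_apply, LinearMap.smul_apply, LinearMap.smul_apply,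
      Module.End.one_apply, hdiag, ← add_smul, add_sub_cancel, one_smul]
  · simp [hΛ_eq, hP.pinching_mul_mul, hij]
  · rw [hΛ_eq, ← Module.End.isUnit_iff]
    exact hP.isIdempotentElem_pinching.isUnit_smul_one_add_smul (by exact_mod_cast hκ0.ne')

/-- The total Lüders channel `Λ X = ∑ a, √(A a) X √(A a)` of the noisy POVM
`A a = λ Π a + (1-λ)/d · 1` (rank-one PVM `{Π a}`, `√(A a) = √(λ+(1-λ)/d) Π a
+ √((1-λ)/d) (1 − Π a)`) acts as the identity on matrices diagonal in the PVM basis and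
multiplies each off-diagonal block `Π i X Π j` (`i ≠ j`) by
`κ = 2√(λ+(1-λ)/d)√((1-λ)/d) + (d-2)(1-λ)/d`; in particular `Λ` is bijective if `κ > 0`. -/
theorem stmt_16 {d : ℕ} (hd : 2 ≤ d)
    (lam : ℝ) (hlam0 : 0 ≤ lam) (hlam1 : lam < 1)
    (P : Fin d → Matrix (Fin d) (Fin d) ℂ)
    (hPh : ∀ a, (P a).IsHermitian)
    (hPo : ∀ a a', P a * P a' = if a = a' then P a else 0)
    (hPsum : ∑ a, P a = 1)
    (hPtr : ∀ a, (P a).trace = 1)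
    (sqrtA : Fin d → Matrix (Fin d) (Fin d) ℂ)
    (hsqrtA : ∀ a, sqrtA a = ((Real.sqrt (lam + (1 - lam) / d) : ℝ) : ℂ) • P a
      + ((Real.sqrt ((1 - lam) / d) : ℝ) : ℂ) • ((1 : Matrix (Fin d) (Fin d) ℂ) - P a))
    (Λ : Matrix (Fin d) (Fin d) ℂ → Matrix (Fin d) (Fin d) ℂ)
    (hΛ : ∀ X, Λ X = ∑ a, sqrtA a * X * sqrtA a)
    (κ : ℝ)
    (hκ : κ = 2 * Real.sqrt (lam + (1 - lam) / d) * Real.sqrt ((1 - lam) / d)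
      + ((d : ℝ) - 2) * ((1 - lam) / d)) :
    (∀ c : Fin d → ℂ, Λ (∑ i, c i • P i) = ∑ i, c i • P i) ∧
    (∀ i j, i ≠ j → ∀ X : Matrix (Fin d) (Fin d) ℂ,
      Λ (P i * X * P j) = (κ : ℂ) • (P i * X * P j)) ∧
    (0 < κ → Function.Bijective Λ) :=
  stmt_16_general hd lam hlam0 hlam1 P hPo hPsum sqrtA hsqrtA Λ hΛ κ hκ
end

section
/- Let κ ∈ (0,1] and let Ξ be the linear map on d×d matrices which fixes 1, multiplies diagonal traceless parts (in a fixed orthonormal basis) by γ, and multiplies off-diagonal matrix units by γ/κ. If γ ≤ 2κ/(d + 2κ − dκ), then Ξ is a positive map: Ξ(X) ≥ 0 for every X ≥ 0. -/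
/-!
Write `Ξ X = a (Tr X) 1 + b Δ X + c X` with `a = (1 - γ)/d`, `b = γ - γ/κ ≤ 0`, `c = γ/κ`. Then
`Ξ X = (-b/2) (Tr X • 1 + X - 2 Δ X) + (a + b/2) (Tr X) 1 + (c + b/2) X`, where `a + b/2 ≥ 0` is
exactly the bound on `γ`. The map `X ↦ Tr X • 1 + X - 2 Δ X` is positive: by linearity it suffices
to take `X = v v*`, and then its quadratic form at `y` is
`‖v‖²‖y‖² + |⟨v, y⟩|² - 2 ∑ᵢ |vᵢ|²|yᵢ|² = ½ ∑_{i ≠ j} |vᵢ yⱼ + vⱼ yᵢ|²`.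
-/

open Matrix ComplexOrder Complex ComplexConjugate

section normSq

variable {n : Type*} [Fintype n]

theorem sum_sum_normSq_mul_add_mul_swap (v y : n → ℂ) :
    ∑ i, ∑ j, normSq (v i * y j + v j * y i) =
      2 * ((∑ i, normSq (v i)) * (∑ i, normSq (y i)) + normSq (star v ⬝ᵥ y)) := by
  have hsq (i j : n) : normSq (v i * y j + v j * y i) = normSq (v i) * normSq (y j)
      + normSq (v j) * normSq (y i) + 2 * (v i * conj (y i) * (conj (v j) * y j)).re := by
    rw [normSq_add, normSq_mul, normSq_mul]
    congr 3
    simp only [map_mul]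
    ring
  have hcross :
      ∑ i, ∑ j, (v i * conj (y i) * (conj (v j) * y j)).re = normSq (star v ⬝ᵥ y) := by
    simp only [← re_sum, ← Finset.sum_mul_sum]
    rw [← ofReal_re (normSq _), normSq_eq_conj_mul_self]
    simp [dotProduct, map_sum]
  simp only [hsq, Finset.sum_add_distrib, ← Finset.mul_sum, ← Finset.sum_mul, hcross]
  ring

theorem two_mul_sum_normSq_mul_le (v y : n → ℂ) :
    2 * ∑ i, normSq (v i) * normSq (y i) ≤
      (∑ i, normSq (v i)) * (∑ i, normSq (y i)) + normSq (star v ⬝ᵥ y) := by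
  have hdiag :
      ∑ i, normSq (v i * y i + v i * y i) ≤ ∑ i, ∑ j, normSq (v i * y j + v j * y i) :=
    Finset.sum_le_sum fun i _ => Finset.single_le_sum (f := fun j => normSq (v i * y j + v j * y i))
      (fun j _ => normSq_nonneg _) (Finset.mem_univ i)
  have hdouble (i : n) : normSq (v i * y i + v i * y i) = 4 * (normSq (v i) * normSq (y i)) := by
    rw [← two_mul, normSq_mul, normSq_mul]
    norm_num
  simp only [hdouble, ← Finset.mul_sum, sum_sum_normSq_mul_add_mul_swap] at hdiag
  linarith

end normSq

namespace Matrix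

variable {n : Type*} [Fintype n] [DecidableEq n]

def traceSmulOneAddSubTwoDiagonal (R : Type*) [CommRing R] : Matrix n n R →ₗ[R] Matrix n n R :=
  (traceLinearMap n R R).smulRight 1 + LinearMap.id
    - 2 • (diagonalLinearMap n R R ∘ₗ diagLinearMap n R R)

@[simp]
theorem traceSmulOneAddSubTwoDiagonal_apply {R : Type*} [CommRing R] (X : Matrix n n R) :
    traceSmulOneAddSubTwoDiagonal R X = X.trace • 1 + X - 2 • diagonal X.diag :=
  rfl

theorem posSemidef_traceSmulOneAddSubTwoDiagonal_vecMulVec (v : n → ℂ) :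
    (traceSmulOneAddSubTwoDiagonal ℂ (vecMulVec v (star v))).PosSemidef := by
  set X := vecMulVec v (star v)
  have hX : X.PosSemidef := posSemidef_vecMulVec_self_star v
  have hΔX : (diagonal X.diag).PosSemidef := PosSemidef.diagonal fun i => hX.diag_nonneg
  refine .of_dotProduct_mulVec_nonneg
    (((PosSemidef.one.smul hX.trace_nonneg).isHermitian.add hX.isHermitian).sub
      (hΔX.smul (zero_le_two (α := ℕ))).isHermitian) fun y => ?_
  have htrace : X.trace = ((∑ i, normSq (v i) : ℝ) : ℂ) := by
    simp [X, trace_vecMulVec, dotProduct, mul_conj]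
  have hnorm : star y ⬝ᵥ y = ((∑ i, normSq (y i) : ℝ) : ℂ) := by
    simp [dotProduct, normSq_eq_conj_mul_self]
  have hrank : star y ⬝ᵥ (X *ᵥ y) = (normSq (star v ⬝ᵥ y) : ℂ) := by
    rw [vecMulVec_mulVec, dotProduct_smul, op_smul_eq_mul, star_dotProduct,
      normSq_eq_conj_mul_self]
    rfl
  have hpinch :
      star y ⬝ᵥ (diagonal X.diag *ᵥ y) = ((∑ i, normSq (v i) * normSq (y i) : ℝ) : ℂ) := by
    simp only [X, dotProduct, mulVec_diagonal, diag_vecMulVec, Pi.mul_apply, Pi.star_apply,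
      star_def]
    push_cast [normSq_eq_conj_mul_self]
    exact Finset.sum_congr rfl fun i _ => by ring
  have hform : star y ⬝ᵥ (traceSmulOneAddSubTwoDiagonal ℂ X *ᵥ y) =
      (((∑ i, normSq (v i)) * (∑ i, normSq (y i)) + normSq (star v ⬝ᵥ y)
        - 2 * ∑ i, normSq (v i) * normSq (y i) : ℝ) : ℂ) := by
    simp only [traceSmulOneAddSubTwoDiagonal_apply, add_mulVec, sub_mulVec, smul_mulVec,
      one_mulVec, dotProduct_add, dotProduct_sub, dotProduct_smul, htrace, hnorm, hrank, hpinch]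
    push_cast
    ring
  rw [hform, zero_le_real]
  linarith [two_mul_sum_normSq_mul_le v y]

theorem PosSemidef.traceSmulOneAddSubTwoDiagonal {X : Matrix n n ℂ} (hX : X.PosSemidef) :
    (traceSmulOneAddSubTwoDiagonal ℂ X).PosSemidef := by
  obtain ⟨m, v, rfl⟩ := posSemidef_iff_eq_sum_vecMulVec.mp hX
  rw [map_sum]
  exact posSemidef_sum _ fun k _ => posSemidef_traceSmulOneAddSubTwoDiagonal_vecMulVec (v k)

theorem PosSemidef.smul_trace_smul_one_add_smul_diagonal_add_smul {X : Matrix n n ℂ}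
    (hX : X.PosSemidef) {a b c : ℝ} (hb : b ≤ 0) (hab : 0 ≤ 2 * a + b) (hcb : 0 ≤ 2 * c + b) :
    ((a : ℂ) • (X.trace • 1) + (b : ℂ) • diagonal X.diag + (c : ℂ) • X).PosSemidef := by
  have hdecomp : (a : ℂ) • (X.trace • 1) + (b : ℂ) • diagonal X.diag + (c : ℂ) • X =
      ((-b / 2 : ℝ) : ℂ) • Matrix.traceSmulOneAddSubTwoDiagonal ℂ X
        + ((a + b / 2 : ℝ) : ℂ) • (X.trace • 1) + ((c + b / 2 : ℝ) : ℂ) • X := by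
    rw [traceSmulOneAddSubTwoDiagonal_apply]
    push_cast
    module
  rw [hdecomp]
  refine ((hX.traceSmulOneAddSubTwoDiagonal.smul ?_).add
    ((PosSemidef.one.smul hX.trace_nonneg).smul ?_)).add (hX.smul ?_) <;>
  · rw [zero_le_real]
    linarith

end Matrix

/-- Positivity bound: the map `Ξ` which fixes the identity, multiplies diagonal traceless
parts by `γ` and off-diagonal parts by `γ/κ` — explicitly
`Ξ X = (Tr X / d) 1 + γ (Δ X − (Tr X / d) 1) + (γ/κ)(X − Δ X)` with `Δ` the pinching onto
diagonal matrices — is a positive map whenever `γ ≤ 2κ/(d + 2κ − dκ)`. -/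
theorem stmt_17 {d : ℕ} (hd : 2 ≤ d)
    (κ : ℝ) (hκ0 : 0 < κ) (hκ1 : κ ≤ 1)
    (gam : ℝ) (hgam0 : 0 ≤ gam)
    (hbound : gam ≤ 2 * κ / ((d : ℝ) + 2 * κ - (d : ℝ) * κ))
    (Δ : Matrix (Fin d) (Fin d) ℂ → Matrix (Fin d) (Fin d) ℂ)
    (hΔ : ∀ X, Δ X = Matrix.diagonal (fun i => X i i))
    (Xi : Matrix (Fin d) (Fin d) ℂ → Matrix (Fin d) (Fin d) ℂ)
    (hXi : ∀ X, Xi X = (X.trace / (d : ℂ)) • (1 : Matrix (Fin d) (Fin d) ℂ)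
      + (gam : ℂ) • (Δ X - (X.trace / (d : ℂ)) • 1)
      + ((gam / κ : ℝ) : ℂ) • (X - Δ X)) :
    ∀ X : Matrix (Fin d) (Fin d) ℂ, X.PosSemidef → (Xi X).PosSemidef := by
  intro X hX
  have hd0 : (0 : ℝ) < d := by positivity
  have hXi' : Xi X = (((1 - gam) / d : ℝ) : ℂ) • (X.trace • 1)
      + ((gam - gam / κ : ℝ) : ℂ) • diagonal X.diag + ((gam / κ : ℝ) : ℂ) • X := by
    rw [hXi, hΔ, show (diagonal fun i => X i i) = diagonal X.diag from rfl]
    push_cast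
    module
  rw [hXi']
  have hden : 0 < (d : ℝ) + 2 * κ - d * κ := by nlinarith
  have hslack : 0 ≤ 2 * κ - gam * ((d : ℝ) + 2 * κ - d * κ) := by
    linarith [(le_div_iff₀ hden).mp hbound]
  refine hX.smul_trace_smul_one_add_smul_diagonal_add_smul ?_ ?_ ?_
  · linarith [le_div_self hgam0 hκ0 hκ1]
  · have hcoeff : 2 * ((1 - gam) / d) + (gam - gam / κ)
        = (2 * κ - gam * (d + 2 * κ - d * κ)) / (d * κ) := by
      field_simp
      ring
    rw [hcoeff]
    exact div_nonneg hslack (by positivity)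
  · have : 0 ≤ gam / κ := by positivity
    linarith
end

section
/- Let {Π_a} and {Π'_b} be nontrivial PVMs (each with at least two nonzero elements) on a d-dimensional Hilbert space with d ≥ 2. Then there is no family of POVMs {W_{ab}} such that, for every unitary U, {W_{ab}} is a joint POVM for {Π_a} and {U† Π'_b U}; that is, there exists a unitary U for which {Π_a} and {U† Π'_b U} are not jointly measurable (since joint measurability of PVMs forces [Π_a, U† Π'_b U] = 0 for all a, b, which fails for some U). -/
open Matrix BigOperators ComplexOrder


lemma key_noncomm {d : ℕ} (A B V W : Matrix (Fin d) (Fin d) ℂ)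
    (hV : V ∈ Matrix.unitaryGroup (Fin d) ℂ) (hW : W ∈ Matrix.unitaryGroup (Fin d) ℂ)
    (dp e : Fin d → ℂ)
    (hA : A = V * Matrix.diagonal dp * Vᴴ) (hB : B = W * Matrix.diagonal e * Wᴴ)
    (i j : Fin d) (hdi : dp i = 1) (hdj : dp j = 0)
    (i1 j1 : Fin d) (hij1 : i1 ≠ j1) (hei : e i1 = 1) (hej : e j1 = 0) :
    ∃ U ∈ Matrix.unitaryGroup (Fin d) ℂ, A * (Uᴴ * B * U) ≠ (Uᴴ * B * U) * A := by
  have hij : i ≠ j := fun h => by rw [h, hdj] at hdi; exact one_ne_zero hdi.symm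
  -- the permutation sending i to i1 and j to j1
  set τ : Equiv.Perm (Fin d) := Equiv.swap i i1 with hτ
  have hτji1 : τ j ≠ i1 := by
    intro h
    have h2 := congrArg τ h
    rw [hτ, Equiv.swap_apply_self, Equiv.swap_apply_right] at h2
    exact hij h2.symm
  set σ : Equiv.Perm (Fin d) := τ.trans (Equiv.swap (τ j) j1) with hσ
  have hσi : σ i = i1 := by
    rw [hσ, Equiv.trans_apply, hτ, Equiv.swap_apply_left,
      Equiv.swap_apply_of_ne_of_ne (Ne.symm hτji1) hij1]
  have hσj : σ j = j1 := by
    rw [hσ, Equiv.trans_apply, Equiv.swap_apply_left]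
  -- entries of the rotation
  set c3 : ℂ := ((3/5 : ℝ) : ℂ) with hc3
  set c4 : ℂ := ((4/5 : ℝ) : ℂ) with hc4
  -- the columns of T
  set col : Fin d → Fin d → ℂ := fun t s =>
    if t = i then (if s = i1 then c3 else 0) + (if s = j1 then c4 else 0)
    else if t = j then (if s = i1 then -c4 else 0) + (if s = j1 then c3 else 0)
    else if s = σ t then 1 else 0 with hcol
  set T : Matrix (Fin d) (Fin d) ℂ := Matrix.of (fun s t => col t s) with hT
  have hstar : ∀ t s, star (col t s) = col t s := by
    intro t s
    rw [hcol]
    dsimp only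
    split_ifs <;> simp [hc3, hc4, ← Complex.ofReal_neg]
  -- generic sum engines
  have hsum2 : ∀ f g : Fin d → ℂ,
      (∑ s, ((if s = i1 then f s else 0) + (if s = j1 then g s else 0))) = f i1 + g j1 := by
    intro f g
    rw [Finset.sum_add_distrib, Fintype.sum_ite_eq', Fintype.sum_ite_eq']
  have hprodE : ∀ (h : Fin d → ℂ) (a b a' b' : ℂ),
      (∑ s, (((if s = i1 then a else 0) + (if s = j1 then b else 0)) *
        (h s * ((if s = i1 then a' else 0) + (if s = j1 then b' else 0))))) =
        a * (h i1 * a') + b * (h j1 * b') := by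
    intro h a b a' b'
    rw [← hsum2 (fun _ => a * (h i1 * a')) (fun _ => b * (h j1 * b'))]
    apply Finset.sum_congr rfl
    intro s _
    by_cases h1 : s = i1
    · subst h1
      rw [if_pos rfl, if_pos rfl, if_pos rfl, if_neg hij1, if_neg hij1, if_neg hij1]
      ring
    · by_cases h2 : s = j1
      · subst h2
        rw [if_neg h1, if_neg h1, if_neg h1, if_pos rfl, if_pos rfl, if_pos rfl]
        ring
      · rw [if_neg h1, if_neg h1, if_neg h1, if_neg h2, if_neg h2, if_neg h2]
        ring
  have hprod : ∀ (a b a' b' : ℂ),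
      (∑ s, (((if s = i1 then a else 0) + (if s = j1 then b else 0)) *
        ((if s = i1 then a' else 0) + (if s = j1 then b' else 0)))) = a * a' + b * b' := by
    intro a b a' b'
    have := hprodE (fun _ => 1) a b a' b'
    simp only [one_mul] at this
    exact this
  have hpick : ∀ (f : Fin d → ℂ) (k : Fin d), (∑ s, (if s = k then (1:ℂ) else 0) * f s) = f k := by
    intro f k
    rw [show (∑ s, (if s = k then (1:ℂ) else 0) * f s) = ∑ s, (if s = k then f s else 0) from
      Finset.sum_congr rfl (fun s _ => by split_ifs <;> simp)]
    exact Fintype.sum_ite_eq' k f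
  have hpick' : ∀ (f : Fin d → ℂ) (k : Fin d), (∑ s, f s * (if s = k then (1:ℂ) else 0)) = f k := by
    intro f k
    rw [show (∑ s, f s * (if s = k then (1:ℂ) else 0)) = ∑ s, (if s = k then f s else 0) from
      Finset.sum_congr rfl (fun s _ => by split_ifs <;> simp)]
    exact Fintype.sum_ite_eq' k f
  have hσne : ∀ t, t ≠ i → t ≠ j → σ t ≠ i1 ∧ σ t ≠ j1 := by
    intro t ht1 ht2
    exact ⟨fun h => ht1 (σ.injective (h.trans hσi.symm)),
      fun h => ht2 (σ.injective (h.trans hσj.symm))⟩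
  -- explicit column formulas
  have hcoli : ∀ s, col i s = (if s = i1 then c3 else 0) + (if s = j1 then c4 else 0) := by
    intro s; rw [hcol]; dsimp only; rw [if_pos rfl]
  have hcolj : ∀ s, col j s = (if s = i1 then -c4 else 0) + (if s = j1 then c3 else 0) := by
    intro s; rw [hcol]; dsimp only; rw [if_neg (Ne.symm hij), if_pos rfl]
  have hcolo : ∀ t, t ≠ i → t ≠ j → ∀ s, col t s = if s = σ t then 1 else 0 := by
    intro t h1 h2 s; rw [hcol]; dsimp only; rw [if_neg h1, if_neg h2]
  have h345 : c3 * c3 + c4 * c4 = 1 := by rw [hc3, hc4]; push_cast; norm_num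
  -- dot products of columns
  have hdot : ∀ t t', (∑ s, star (col t s) * col t' s) = if t = t' then 1 else 0 := by
    intro t t'
    simp only [hstar]
    by_cases ht : t = i
    · by_cases ht' : t' = i
      · rw [ht, ht', if_pos rfl]
        simp only [hcoli]
        rw [hprod, h345]
      · by_cases ht'' : t' = j
        · rw [ht, ht'', if_neg hij]
          simp only [hcoli, hcolj]
          rw [hprod]
          ring
        · obtain ⟨hn1, hn2⟩ := hσne t' ht' ht''
          rw [ht, if_neg (fun h => ht' h.symm)]
          simp only [hcoli, hcolo t' ht' ht'']
          rw [hpick']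
          simp only [if_neg hn1, if_neg hn2, add_zero]
    · by_cases ht2 : t = j
      · by_cases ht' : t' = i
        · rw [ht2, ht', if_neg (Ne.symm hij)]
          simp only [hcolj, hcoli]
          rw [hprod]
          ring
        · by_cases ht'' : t' = j
          · rw [ht2, ht'', if_pos rfl]
            simp only [hcolj]
            rw [hprod]
            rw [show -c4 * -c4 + c3 * c3 = c3 * c3 + c4 * c4 from by ring, h345]
          · obtain ⟨hn1, hn2⟩ := hσne t' ht' ht''
            rw [ht2, if_neg (fun h => ht'' h.symm)]
            simp only [hcolj, hcolo t' ht' ht'']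
            rw [hpick']
            simp only [if_neg hn1, if_neg hn2, add_zero]
      · obtain ⟨hn1, hn2⟩ := hσne t ht ht2
        by_cases ht' : t' = i
        · rw [ht', if_neg ht]
          simp only [hcolo t ht ht2, hcoli]
          rw [hpick]
          simp only [if_neg hn1, if_neg hn2, add_zero]
        · by_cases ht'' : t' = j
          · rw [ht'', if_neg (fun h : t = j => ht2 h)]
            simp only [hcolo t ht ht2, hcolj]
            rw [hpick]
            simp only [if_neg hn1, if_neg hn2, add_zero]
          · simp only [hcolo t ht ht2, hcolo t' ht' ht'']
            rw [hpick]
            by_cases h : t = t'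
            · rw [if_pos (h ▸ rfl), if_pos h]
            · rw [if_neg (fun hh : σ t = σ t' => h (σ.injective hh)), if_neg h]
  -- T is unitary
  have hT1 : Tᴴ * T = 1 := by
    ext t t'
    rw [Matrix.mul_apply, Matrix.one_apply, ← hdot t t']
    apply Finset.sum_congr rfl
    intro s _
    rw [Matrix.conjTranspose_apply, hT, Matrix.of_apply, Matrix.of_apply]
  have hTmem : T ∈ Matrix.unitaryGroup (Fin d) ℂ := by
    rw [Matrix.mem_unitaryGroup_iff', Matrix.star_eq_conjTranspose]
    exact hT1
  -- unitarity facts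
  have hV1 : Vᴴ * V = 1 := by
    rw [← Matrix.star_eq_conjTranspose]
    exact (Matrix.mem_unitaryGroup_iff').mp hV
  have hW1 : Wᴴ * W = 1 := by
    rw [← Matrix.star_eq_conjTranspose]
    exact (Matrix.mem_unitaryGroup_iff').mp hW
  have hVc : ∀ X : Matrix (Fin d) (Fin d) ℂ, Vᴴ * (V * X) = X := fun X => by
    rw [← Matrix.mul_assoc, hV1, Matrix.one_mul]
  have hWc : ∀ X : Matrix (Fin d) (Fin d) ℂ, Wᴴ * (W * X) = X := fun X => by
    rw [← Matrix.mul_assoc, hW1, Matrix.one_mul]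
  -- the key matrix entry
  have hMij : (Tᴴ * (Matrix.diagonal e * T)) i j = -(c3 * c4) := by
    have h1 : (Tᴴ * (Matrix.diagonal e * T)) i j = ∑ s, col i s * (e s * col j s) := by
      rw [Matrix.mul_apply]
      apply Finset.sum_congr rfl
      intro s _
      rw [Matrix.conjTranspose_apply, hT, Matrix.of_apply, hstar, Matrix.mul_apply]
      congr 1
      rw [Finset.sum_eq_single s]
      · rw [Matrix.diagonal_apply_eq, Matrix.of_apply]
      · intro k _ hk
        rw [Matrix.diagonal_apply_ne' _ hk, zero_mul]
      · intro hs
        exact absurd (Finset.mem_univ s) hs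
    rw [h1]
    simp only [hcoli, hcolj]
    rw [hprodE e c3 c4 (-c4) c3, hei, hej]
    ring
  have hMne : (-(c3 * c4) : ℂ) ≠ 0 := by
    rw [hc3, hc4]
    norm_num
  -- the unitary U
  refine ⟨W * T * Vᴴ, ?_, ?_⟩
  · exact mul_mem (mul_mem hW hTmem) (Unitary.star_mem hV)
  · intro hcomm
    have hX : (W * T * Vᴴ)ᴴ * B * (W * T * Vᴴ)
        = V * (Tᴴ * (Matrix.diagonal e * (T * Vᴴ))) := by
      rw [hB]
      simp only [Matrix.conjTranspose_mul, Matrix.conjTranspose_conjTranspose,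
        Matrix.mul_assoc, hWc]
    rw [hX, hA] at hcomm
    have h2 := congrArg (fun Z => Vᴴ * (Z * V)) hcomm
    simp only [Matrix.mul_assoc, hVc, hV1, Matrix.mul_one] at h2
    have h3 := congrArg (fun Z => Z i j) h2
    rw [show Matrix.diagonal dp * (Tᴴ * (Matrix.diagonal e * T))
        = Matrix.diagonal dp * (Tᴴ * (Matrix.diagonal e * T)) from rfl] at h3
    have hL : (Matrix.diagonal dp * (Tᴴ * (Matrix.diagonal e * T))) i j
        = dp i * (Tᴴ * (Matrix.diagonal e * T)) i j := by
      rw [Matrix.diagonal_mul]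
    have hR : (Tᴴ * (Matrix.diagonal e * (T * Matrix.diagonal dp))) i j
        = (Tᴴ * (Matrix.diagonal e * T)) i j * dp j := by
      rw [← Matrix.mul_assoc, ← Matrix.mul_assoc, Matrix.mul_diagonal, ← Matrix.mul_assoc]
    rw [hL, hR, hMij, hdi, hdj, one_mul, mul_zero] at h3
    exact hMne h3

/-- Any nonzero, non-identity Hermitian projection is unitarily diagonalizable with
diagonal entries attaining both `1` and `0`. -/
lemma proj_diag {d : ℕ} (A : Matrix (Fin d) (Fin d) ℂ) (hA : A.IsHermitian)
    (hAA : A * A = A) (hA0 : A ≠ 0) (hA1 : A ≠ 1) :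
    ∃ V ∈ Matrix.unitaryGroup (Fin d) ℂ, ∃ f : Fin d → ℂ,
      A = V * Matrix.diagonal f * Vᴴ ∧ (∃ i, f i = 1) ∧ (∃ j, f j = 0) := by
  set V : Matrix (Fin d) (Fin d) ℂ := (hA.eigenvectorUnitary : Matrix (Fin d) (Fin d) ℂ) with hVdef
  have hVm : V ∈ Matrix.unitaryGroup (Fin d) ℂ := hA.eigenvectorUnitary.2
  set f : Fin d → ℂ := RCLike.ofReal ∘ hA.eigenvalues with hf
  have hsp : A = V * Matrix.diagonal f * Vᴴ := by
    rw [← Matrix.star_eq_conjTranspose]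
    exact hA.spectral_theorem
  have hV1 : Vᴴ * V = 1 := by
    rw [← Matrix.star_eq_conjTranspose]
    exact (Matrix.mem_unitaryGroup_iff').mp hVm
  have hV2 : V * Vᴴ = 1 := by
    rw [← Matrix.star_eq_conjTranspose]
    exact (Matrix.mem_unitaryGroup_iff).mp hVm
  have hVc : ∀ X : Matrix (Fin d) (Fin d) ℂ, Vᴴ * (V * X) = X := fun X => by
    rw [← Matrix.mul_assoc, hV1, Matrix.one_mul]
  have hcan : ∀ X Y : Matrix (Fin d) (Fin d) ℂ, V * X * Vᴴ = V * Y * Vᴴ → X = Y := by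
    intro X Y h
    have h2 := congrArg (fun Z => Vᴴ * (Z * V)) h
    simp only [Matrix.mul_assoc, hV1, Matrix.mul_one, hVc] at h2
    exact h2
  have hDD : Matrix.diagonal f * Matrix.diagonal f = Matrix.diagonal f := by
    apply hcan
    calc V * (Matrix.diagonal f * Matrix.diagonal f) * Vᴴ
        = (V * Matrix.diagonal f * Vᴴ) * (V * Matrix.diagonal f * Vᴴ) := by
          simp only [Matrix.mul_assoc, hVc]
      _ = V * Matrix.diagonal f * Vᴴ := by rw [← hsp, hAA]
  have hff : ∀ k, f k = 0 ∨ f k = 1 := by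
    intro k
    rw [Matrix.diagonal_mul_diagonal] at hDD
    have h3 := congrFun (Matrix.diagonal_injective hDD) k
    have h4 : f k * (f k - 1) = 0 := by
      have : f k * f k = f k := h3
      ring_nf
      ring_nf at this
      rw [this]
      ring
    rcases mul_eq_zero.mp h4 with h | h
    · exact Or.inl h
    · exact Or.inr (by linear_combination h)
  have hex1 : ∃ i, f i = 1 := by
    by_contra h
    push_neg at h
    have hz : f = 0 := by
      funext k
      rcases hff k with h0 | h1
      · exact h0
      · exact absurd h1 (h k)
    apply hA0
    rw [hsp, hz]
    rw [show (Matrix.diagonal (0 : Fin d → ℂ)) = (0 : Matrix (Fin d) (Fin d) ℂ) from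
      Matrix.diagonal_zero, Matrix.mul_zero, Matrix.zero_mul]
  have hex0 : ∃ j, f j = 0 := by
    by_contra h
    push_neg at h
    have hz : f = fun _ => 1 := by
      funext k
      rcases hff k with h0 | h1
      · exact absurd h0 (h k)
      · exact h1
    apply hA1
    rw [hsp, hz]
    rw [show (Matrix.diagonal (fun _ => (1:ℂ)) : Matrix (Fin d) (Fin d) ℂ) = 1 from
      Matrix.diagonal_one]
    rw [Matrix.mul_one, hV2]
  exact ⟨V, hVm, f, hsp, hex1, hex0⟩


/-- Core of the extended no-go theorem for projective measurements: for any two nontrivial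
PVMs `{Π a}` and `{Π' b}` (each with at least two nonzero projectors) on a `d`-dimensional
space with `d ≥ 2`, there exist a unitary `U` and outcomes `a`, `b` such that `Π a` and
`U† Π' b U` do not commute. Hence no joint POVM of `{Π a}` and `{U† Π' b U}` can exist
for every `U`. -/
theorem stmt_19 {d m n : ℕ} (hd : 2 ≤ d)
    (P : Fin m → Matrix (Fin d) (Fin d) ℂ)
    (Q : Fin n → Matrix (Fin d) (Fin d) ℂ)
    (hPh : ∀ a, (P a).IsHermitian)
    (hPo : ∀ a a', P a * P a' = if a = a' then P a else 0)
    (hPsum : ∑ a, P a = 1)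
    (hQh : ∀ b, (Q b).IsHermitian)
    (hQo : ∀ b b', Q b * Q b' = if b = b' then Q b else 0)
    (hQsum : ∑ b, Q b = 1)
    (hPnontriv : ∃ a a', a ≠ a' ∧ P a ≠ 0 ∧ P a' ≠ 0)
    (hQnontriv : ∃ b b', b ≠ b' ∧ Q b ≠ 0 ∧ Q b' ≠ 0) :
    ∃ U ∈ Matrix.unitaryGroup (Fin d) ℂ, ∃ a b,
      P a * (Uᴴ * Q b * U) ≠ (Uᴴ * Q b * U) * P a := by
  obtain ⟨a, a', haa', hPa, hPa'⟩ := hPnontriv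
  obtain ⟨b, b', hbb', hQb, hQb'⟩ := hQnontriv
  have hPaa : P a * P a = P a := by simpa using hPo a a
  have hQbb : Q b * Q b = Q b := by simpa using hQo b b
  have hPa1 : P a ≠ 1 := by
    intro h
    have h2 := hPo a a'
    rw [if_neg haa', h, one_mul] at h2
    exact hPa' h2
  have hQb1 : Q b ≠ 1 := by
    intro h
    have h2 := hQo b b'
    rw [if_neg hbb', h, one_mul] at h2
    exact hQb' h2
  obtain ⟨V, hV, f, hfA, ⟨i, hi⟩, ⟨j, hj⟩⟩ := proj_diag (P a) (hPh a) hPaa hPa hPa1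
  obtain ⟨W, hW, g, hgB, ⟨i1, hi1⟩, ⟨j1, hj1⟩⟩ := proj_diag (Q b) (hQh b) hQbb hQb hQb1
  have hij1 : i1 ≠ j1 := fun h => by rw [h, hj1] at hi1; exact one_ne_zero hi1.symm
  obtain ⟨U, hU, hne⟩ := key_noncomm (P a) (Q b) V W hV hW f g hfA hgB i j hi hj i1 j1 hij1 hi1 hj1
  exact ⟨U, hU, a, b, hne⟩
end
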